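/- arXiv:2601.19950 — 4 statements merged into one kernel-verified Lean document; each statement's English description precedes it below -/
import Mathlib

section
/- Let F₁,…,Fₙ : ℝ²_{>0} → ℝ be concave and differentiable, with states (xᵢ,yᵢ), and suppose there exist positive valuations Vⱼ for each token such that each ∇Fᵢ(xᵢ,yᵢ) is a positive multiple of the valuation vector of its two token types. If (xᵢ',yᵢ') are new states such that the total amount of each token type is conserved (∑ of each token over pools unchanged), and Fᵢ(xᵢ',yᵢ') ≥ Fᵢ(xᵢ,yᵢ) for all i, then Fᵢ(xᵢ',yᵢ') = Fᵢ(xᵢ,yᵢ) for all i; that is, no token-conserving reassignment of pool balances can weakly increase all liquidities and strictly increase one. -/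
/-- Supporting hyperplane inequality for a concave differentiable function. -/
lemma concave_le_add_fderiv {F : ℝ × ℝ → ℝ} (hconc : ConcaveOn ℝ Set.univ F)
    {p : ℝ × ℝ} {D : ℝ × ℝ →L[ℝ] ℝ} (hdiff : HasFDerivAt F D p) (q : ℝ × ℝ) :
    F q ≤ F p + D (q - p) := by
  set L : ℝ →ᵃ[ℝ] ℝ × ℝ := AffineMap.lineMap p q with hL
  have hg : ConcaveOn ℝ Set.univ (F ∘ L) := by
    have := hconc.comp_affineMap L
    simpa using this
  have hL0 : L 0 = p := AffineMap.lineMap_apply_zero p q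
  have hline : HasDerivAt (fun t : ℝ => L t) (q - p) 0 := by
    have h : HasDerivAt (fun t : ℝ => t • (q - p) + p) (q - p) 0 := by
      simpa using ((hasDerivAt_id (0 : ℝ)).smul_const (q - p)).add_const p
    simpa [hL, AffineMap.lineMap_apply] using h
  have hgderiv : HasDerivAt (F ∘ L) (D (q - p)) 0 := by
    have hd : HasFDerivAt F D (L 0) := by rwa [hL0]
    exact hd.comp_hasDerivAt 0 hline
  have hslope := hg.slope_le_of_hasDerivAt (x := 0) (y := 1)
    (Set.mem_univ _) (Set.mem_univ _) one_pos hgderiv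
  have h1 : slope (F ∘ L) 0 1 = F q - F p := by
    simp [slope_def_field, hL, AffineMap.lineMap_apply]
  rw [h1] at hslope
  linarith


/-- Theorem "arbitrage-free": if a configuration of CFMMs admits a consistent
positive valuation of the `m` token types matching every CFMM's gradient (spot
prices), then no token-conserving rebalancing can weakly increase all
liquidities with one strict increase: all liquidities must stay equal. -/
theorem arbitrage_free_is_pareto_efficient
    (n m : ℕ)
    (tok : Fin n → Fin 2 → Fin m)             -- token types of each CFMM's two pools
    (V : Fin m → ℝ) (hV : ∀ k, 0 < V k)       -- positive valuation of each token
    (F : Fin n → ℝ × ℝ → ℝ)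
    (hconc : ∀ i, ConcaveOn ℝ Set.univ (F i))
    (x y : Fin n → ℝ) (hx : ∀ i, 0 < x i) (hy : ∀ i, 0 < y i)
    (D : Fin n → (ℝ × ℝ →L[ℝ] ℝ))
    (hdiff : ∀ i, HasFDerivAt (F i) (D i) (x i, y i))
    (c : Fin n → ℝ) (hc : ∀ i, 0 < c i)
    (hgrad : ∀ i (v : ℝ × ℝ),
      D i v = c i * (V (tok i 0) * v.1 + V (tok i 1) * v.2))
    (x' y' : Fin n → ℝ)
    (hcons : ∀ k : Fin m,
      (∑ i, ((if tok i 0 = k then x' i - x i else 0)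
           + (if tok i 1 = k then y' i - y i else 0))) = 0)
    (hge : ∀ i, F i (x i, y i) ≤ F i (x' i, y' i)) :
    ∀ i, F i (x' i, y' i) = F i (x i, y i) := by
  -- define the per-pool valuation change
  set S : Fin n → ℝ := fun i =>
    V (tok i 0) * (x' i - x i) + V (tok i 1) * (y' i - y i) with hS
  -- supporting hyperplane: F i (x',y') ≤ F i (x,y) + c i * S i
  have hub : ∀ i, F i (x' i, y' i) ≤ F i (x i, y i) + c i * S i := by
    intro i
    have := concave_le_add_fderiv (hconc i) (hdiff i) (x' i, y' i)
    rwa [hgrad i] at this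
  -- each S i is nonnegative
  have hSnn : ∀ i, 0 ≤ S i := by
    intro i
    have h1 := hge i
    have h2 := hub i
    have : 0 ≤ c i * S i := by linarith
    exact nonneg_of_mul_nonneg_right this (hc i)
  -- total valuation change is zero, by conservation
  have key : ∀ i, S i = ∑ k, V k * ((if tok i 0 = k then x' i - x i else 0)
      + (if tok i 1 = k then y' i - y i else 0)) := by
    intro i
    simp [hS, mul_add, Finset.sum_add_distrib, mul_ite, mul_zero, Finset.sum_ite_eq]
  have hsum : ∑ i, S i = 0 := by
    calc ∑ i, S i
        = ∑ i, ∑ k, V k * ((if tok i 0 = k then x' i - x i else 0)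
            + (if tok i 1 = k then y' i - y i else 0)) := by
          exact Finset.sum_congr rfl fun i _ => key i
      _ = ∑ k, V k * (∑ i, ((if tok i 0 = k then x' i - x i else 0)
            + (if tok i 1 = k then y' i - y i else 0))) := by
          rw [Finset.sum_comm]
          simp [Finset.mul_sum]
      _ = 0 := by simp [hcons]
  -- nonneg terms summing to zero are all zero
  have hSzero : ∀ i, S i = 0 := by
    intro i
    have := (Finset.sum_eq_zero_iff_of_nonneg (fun j _ => hSnn j)).mp hsum
    exact this i (Finset.mem_univ i)
  intro i
  have h2 := hub i
  rw [hSzero i, mul_zero, add_zero] at h2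
  exact le_antisymm h2 (hge i)
end

section
/- Let n CFMMs share the same pair of token types, each with concave differentiable trading function Fᵢ and state (xᵢ,yᵢ), and suppose there exist V₁,V₂ > 0 such that ∇Fᵢ(xᵢ,yᵢ) is a positive multiple of (V₁,V₂) for every i. If (xᵢ',yᵢ') satisfy ∑ᵢ xᵢ' = ∑ᵢ xᵢ and ∑ᵢ yᵢ' = ∑ᵢ yᵢ and Fᵢ(xᵢ',yᵢ') ≥ Fᵢ(xᵢ,yᵢ) for all i, then none of these inequalities is strict, i.e. Fᵢ(xᵢ',yᵢ') = Fᵢ(xᵢ,yᵢ) for all i. -/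
open Filter Topology

lemma concave_le_tangent {E : Type*} [NormedAddCommGroup E] [NormedSpace ℝ E]
    {F : E → ℝ} (hF : ConcaveOn ℝ Set.univ F) {z z' : E} {D : E →L[ℝ] ℝ}
    (hD : HasFDerivAt F D z) : F z' - F z ≤ D (z' - z) := by
  set d := z' - z with hd
  have hline : HasDerivAt (fun t : ℝ => z + t • d) d 0 := by
    simpa using ((hasDerivAt_id (0:ℝ)).smul_const d).const_add z
  have hg : HasDerivAt (fun t : ℝ => F (z + t • d)) (D d) 0 := by
    have hD' : HasFDerivAt F D (z + (0:ℝ) • d) := by simpa using hD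
    exact hD'.comp_hasDerivAt 0 hline
  have hslope : Tendsto (slope (fun t : ℝ => F (z + t • d)) 0) (𝓝[≠] 0) (𝓝 (D d)) :=
    hasDerivAt_iff_tendsto_slope.mp hg
  have hslope' : Tendsto (slope (fun t : ℝ => F (z + t • d)) 0) (𝓝[>] 0) (𝓝 (D d)) :=
    hslope.mono_left (nhdsWithin_mono _ (fun t ht => ne_of_gt ht))
  refine ge_of_tendsto hslope' ?_
  filter_upwards [Ioo_mem_nhdsGT_of_mem (by norm_num : (0:ℝ) ∈ Set.Ico 0 1)] with t ht
  have ht0 : 0 < t := ht.1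
  have ht1 : t < 1 := ht.2
  have hcc : (1 - t) • F z + t • F z' ≤ F ((1 - t) • z + t • z') :=
    hF.2 (Set.mem_univ z) (Set.mem_univ z') (by linarith) (le_of_lt ht0) (by ring)
  have heq : (1 - t) • z + t • z' = z + t • d := by
    simp only [hd, smul_sub, sub_smul, one_smul]; abel
  rw [heq, smul_eq_mul, smul_eq_mul] at hcc
  have hcc' : F z + t * (F z' - F z) ≤ F (z + t • d) := by
    have : (1 - t) * F z + t * F z' = F z + t * (F z' - F z) := by ring
    linarith [this ▸ hcc]
  rw [slope_def_field, sub_zero, le_div_iff₀ ht0]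
  simp only [zero_smul, add_zero]
  nlinarith

/-- Two-token special case of Pareto efficiency: `n` CFMMs on the same token
pair whose gradients at the current states are all positive multiples of a
common valuation `(V₁, V₂)`.  Any rebalancing conserving both token totals that
weakly increases all liquidities leaves every liquidity unchanged. -/
theorem arbitrage_free_pareto_two_tokens
    (n : ℕ) (V₁ V₂ : ℝ) (hV₁ : 0 < V₁) (hV₂ : 0 < V₂)
    (F : Fin n → ℝ × ℝ → ℝ)
    (hconc : ∀ i, ConcaveOn ℝ Set.univ (F i))
    (x y : Fin n → ℝ) (hx : ∀ i, 0 < x i) (hy : ∀ i, 0 < y i)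
    (D : Fin n → (ℝ × ℝ →L[ℝ] ℝ))
    (hdiff : ∀ i, HasFDerivAt (F i) (D i) (x i, y i))
    (c : Fin n → ℝ) (hc : ∀ i, 0 < c i)
    (hgrad : ∀ i (v : ℝ × ℝ), D i v = c i * (V₁ * v.1 + V₂ * v.2))
    (x' y' : Fin n → ℝ)
    (hconsx : ∑ i, x' i = ∑ i, x i) (hconsy : ∑ i, y' i = ∑ i, y i)
    (hge : ∀ i, F i (x i, y i) ≤ F i (x' i, y' i)) :
    ∀ i, F i (x' i, y' i) = F i (x i, y i) := by
  -- define the valuation increments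
  set g : Fin n → ℝ := fun i => V₁ * (x' i - x i) + V₂ * (y' i - y i) with hgdef
  have hsum : ∑ i, g i = 0 := by
    simp only [hgdef]
    rw [Finset.sum_add_distrib, ← Finset.mul_sum, ← Finset.mul_sum]
    rw [Finset.sum_sub_distrib, Finset.sum_sub_distrib, hconsx, hconsy]
    ring
  have htan : ∀ i, F i (x' i, y' i) - F i (x i, y i) ≤ c i * g i := by
    intro i
    have := concave_le_tangent (hconc i) (hD := hdiff i) (z' := (x' i, y' i))
    rwa [hgrad] at this
  have hg_nonneg : ∀ i, 0 ≤ g i := by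
    intro i
    have h1 := htan i
    have h2 := hge i
    nlinarith [hc i]
  have hgzero : ∀ i ∈ Finset.univ, g i = 0 := by
    intro i _
    exact (Finset.sum_eq_zero_iff_of_nonneg (fun j _ => hg_nonneg j)).mp hsum i (Finset.mem_univ i)
  intro i
  have h1 := htan i
  have h2 := hge i
  have h3 := hgzero i (Finset.mem_univ i)
  rw [h3, mul_zero] at h1
  linarith
end

section
/- For three constant-product market makers each in state (a,a) with a > 0 (so all spot prices equal 1 around a trading triangle), any real transfers δ₁, δ₂, δ₃ (δ₁ moving token 1 between CFMMs 1 and 3, etc.) that conserve totals and weakly increase all three products must leave all three products equal to a²; i.e., the symmetric configuration is Pareto efficient under rebalancing. -/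
/-- The symmetric triangle configuration with all pools equal to `a > 0` is
Pareto efficient under rebalancing: any transfers `δ₁ δ₂ δ₃` along the trading
triangle (conserving token totals) that keep all pools positive and weakly
increase all three products must leave every product equal to `a²`. -/
theorem symmetric_triangle_pareto (a δ₁ δ₂ δ₃ : ℝ) (ha : 0 < a)
    (h1a : 0 < a + δ₁) (h1b : 0 < a - δ₂)
    (h2a : 0 < a + δ₂) (h2b : 0 < a - δ₃)
    (h3a : 0 < a + δ₃) (h3b : 0 < a - δ₁)
    (hge1 : a * a ≤ (a + δ₁) * (a - δ₂))
    (hge2 : a * a ≤ (a + δ₂) * (a - δ₃))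
    (hge3 : a * a ≤ (a + δ₃) * (a - δ₁)) :
    (a + δ₁) * (a - δ₂) = a * a ∧
    (a + δ₂) * (a - δ₃) = a * a ∧
    (a + δ₃) * (a - δ₁) = a * a := by
  -- Product of the three pool products equals ∏ (a² - δᵢ²) ≤ a⁶,
  -- while each factor is ≥ a² > 0, forcing equality.
  have key : ((a + δ₁) * (a - δ₂)) * ((a + δ₂) * (a - δ₃)) * ((a + δ₃) * (a - δ₁))
      ≤ (a * a) * (a * a) * (a * a) := by
    have e : ((a + δ₁) * (a - δ₂)) * ((a + δ₂) * (a - δ₃)) * ((a + δ₃) * (a - δ₁))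
        = ((a + δ₁) * (a - δ₁)) * ((a + δ₂) * (a - δ₂)) * ((a + δ₃) * (a - δ₃)) := by
      ring
    rw [e]
    have p1 : 0 < (a + δ₁) * (a - δ₁) := mul_pos h1a h3b
    have p2 : 0 < (a + δ₂) * (a - δ₂) := mul_pos h2a h1b
    have p3 : 0 < (a + δ₃) * (a - δ₃) := mul_pos h3a h2b
    have b1 : (a + δ₁) * (a - δ₁) ≤ a * a := by nlinarith [sq_nonneg δ₁]
    have b2 : (a + δ₂) * (a - δ₂) ≤ a * a := by nlinarith [sq_nonneg δ₂]
    have b3 : (a + δ₃) * (a - δ₃) ≤ a * a := by nlinarith [sq_nonneg δ₃]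
    have ha2 : 0 < a * a := mul_pos ha ha
    have step1 : ((a + δ₁) * (a - δ₁)) * ((a + δ₂) * (a - δ₂)) ≤ (a * a) * (a * a) :=
      mul_le_mul b1 b2 p2.le ha2.le
    exact mul_le_mul step1 b3 p3.le (by positivity)
  have ha2 : 0 < a * a := mul_pos ha ha
  refine ⟨le_antisymm ?_ hge1, le_antisymm ?_ hge2, le_antisymm ?_ hge3⟩
  · nlinarith [mul_pos (mul_pos h2a h2b) (mul_pos h3a h3b), mul_le_mul hge2 hge3 ha2.le (mul_pos h2a h2b).le]
  · nlinarith [mul_pos (mul_pos h1a h1b) (mul_pos h3a h3b), mul_le_mul hge1 hge3 ha2.le (mul_pos h1a h1b).le]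
  · nlinarith [mul_pos (mul_pos h1a h1b) (mul_pos h2a h2b), mul_le_mul hge1 hge2 ha2.le (mul_pos h1a h1b).le]
end

section
/- Two constant-product CFMMs over the same token pair with states (x₁,y₁) and (x₂,y₂), with y₁/x₁ ≠ y₂/x₂, are arbitrage-prone: there exists δ > 0 such that trading δ of token 1 into the CFMM with the higher ratio y/x, then trading the proceeds of token 2 into the other CFMM, returns strictly more than δ of token 1. -/
/-- Two constant-product CFMMs with different spot prices are arbitrage-prone:
for some `δ > 0`, the round trip through both CFMMs returns strictly more than
`δ` of token 1. -/
theorem unequal_ratios_arbitrage_prone (x₁ y₁ x₂ y₂ : ℝ)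
    (hx₁ : 0 < x₁) (hy₁ : 0 < y₁) (hx₂ : 0 < x₂) (hy₂ : 0 < y₂)
    (hne : y₂ / x₂ < y₁ / x₁) :
    ∃ δ : ℝ, 0 < δ ∧
      δ < δ * (y₁ / (x₁ + δ)) * (x₂ / (y₂ + δ * (y₁ / (x₁ + δ)))) := by
  have hA : x₁ * y₂ < y₁ * x₂ := by
    have := (div_lt_div_iff₀ hx₂ hx₁).mp hne
    linarith
  set δ : ℝ := (y₁ * x₂ - x₁ * y₂) / (2 * (y₁ + y₂)) with hδ
  have hδpos : 0 < δ := by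
    apply div_pos <;> linarith
  refine ⟨δ, hδpos, ?_⟩
  have hx₁δ : 0 < x₁ + δ := by linarith
  have hden : 0 < y₂ + δ * (y₁ / (x₁ + δ)) := by positivity
  have hkey : (x₁ + δ) * y₂ + δ * y₁ < y₁ * x₂ := by
    have h2 : 0 < 2 * (y₁ + y₂) := by linarith
    have : δ * (2 * (y₁ + y₂)) = y₁ * x₂ - x₁ * y₂ := by
      rw [hδ]; field_simp
    nlinarith [hδpos]
  clear_value δ
  have hpos : 0 < (x₁ + δ) * y₂ + δ * y₁ := by positivity
  have heq : δ * (y₁ / (x₁ + δ)) * (x₂ / (y₂ + δ * (y₁ / (x₁ + δ))))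
      = δ * y₁ * x₂ / ((x₁ + δ) * y₂ + δ * y₁) := by
    field_simp
  rw [heq, lt_div_iff₀ hpos]
  nlinarith [hδpos, hkey]
end
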